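/- Let G be a finite connected cubic graph and let (I1,I2) be a pair of disjoint independent sets satisfying Conditions (I) and (II). Suppose the cycle setup holds for C' in the no-red-P2 case, with all black vertices v1,...,vk of C' lying in I1. Then I1' = (I1 \ {v1,...,vk}) ∪ {u1,...,uk} is an independent set disjoint from I2, and the pair (I1', I2) again satisfies Conditions (I) and (II). -/

import Mathlib

open SimpleGraph

variable {V : Type*}

/-- A finset `I` is an independent set of `G`. -/
def FinsetIndep (G : SimpleGraph V) (I : Finset V) : Prop :=
  ∀ u ∈ I, ∀ v ∈ I, ¬ G.Adj u v

/-- Condition (I): `|I1| + |I2|` is maximum among all pairs of disjoint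
independent sets of `G`. -/
def CondI (G : SimpleGraph V) (I1 I2 : Finset V) : Prop :=
  ∀ J1 J2 : Finset V, Disjoint J1 J2 → FinsetIndep G J1 → FinsetIndep G J2 →
    J1.card + J2.card ≤ I1.card + I2.card

/-- The set of red vertices: the vertices outside `I1 ∪ I2`. -/
def redSet (I1 I2 : Finset V) : Set V := {v | v ∉ I1 ∧ v ∉ I2}

/-- The number of connected components of the subgraph of `G` induced on the
red vertices. -/
noncomputable def numRedComp (G : SimpleGraph V) (I1 I2 : Finset V) : ℕ :=
  Nat.card ((G.induce (redSet I1 I2)).ConnectedComponent)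

/-- Condition (II): subject to Condition (I), the number of connected
components of the subgraph induced on the red vertices is minimum. -/
def CondII (G : SimpleGraph V) (I1 I2 : Finset V) : Prop :=
  ∀ J1 J2 : Finset V, Disjoint J1 J2 → FinsetIndep G J1 → FinsetIndep G J2 →
    CondI G J1 J2 → numRedComp G I1 I2 ≤ numRedComp G J1 J2

/-- The auxiliary graph `H` on the red vertices: two distinct red vertices are
adjacent iff their distance in `G` is at most 2. -/
def Hgraph (G : SimpleGraph V) (I1 I2 : Finset V) : SimpleGraph (redSet I1 I2) where
  Adj x y := x ≠ y ∧ G.edist (x : V) (y : V) ≤ 2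
  symm := by
    refine ⟨?_⟩
    rintro x y ⟨hne, hd⟩
    exact ⟨hne.symm, by rwa [SimpleGraph.edist_comm]⟩
  loopless := by refine ⟨?_⟩; rintro x ⟨hne, -⟩; exact hne rfl

/-- The number of black vertices on the cycle `C'`: `k` in the no-red-`P2`
case and `k - 1` in the red-`P2` case. -/
def blackCount (k : ℕ) (p2 : Bool) : ℕ := if p2 then k - 1 else k

/-- The cycle setup: `u 0, …, u (k-1)` are red vertices forming the vertex set
of a connected component of `H`, and `C'` is a cycle of `G` which is either
`u 0, v 0, u 1, v 1, …, u (k-1), v (k-1), u 0` (no-red-`P2` case, `p2 = false`,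
`2k` distinct vertices), or
`u 0, v 0, u 1, v 1, …, v (k-2), u (k-1), u 0` (red-`P2` case, `p2 = true`,
`2k - 1` distinct vertices, with `u (k-1)` adjacent to `u 0`). -/
def CycleSetup (G : SimpleGraph V) (I1 I2 : Finset V) (k : ℕ)
    (u v : ℕ → V) (p2 : Bool) : Prop :=
  3 ≤ k ∧
  (∀ i < k, u i ∈ redSet I1 I2) ∧
  (∀ i < blackCount k p2, v i ∈ I1 ∨ v i ∈ I2) ∧
  (∀ i < k, ∀ j < k, u i = u j → i = j) ∧
  (∀ i < blackCount k p2, ∀ j < blackCount k p2, v i = v j → i = j) ∧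
  (∀ i < k, ∀ j < blackCount k p2, u i ≠ v j) ∧
  (∀ i < blackCount k p2, G.Adj (u i) (v i)) ∧
  (∀ i < blackCount k p2, G.Adj (v i) (u ((i + 1) % k))) ∧
  (p2 = true → G.Adj (u (k - 1)) (u 0)) ∧
  (∃ c : (Hgraph G I1 I2).ConnectedComponent,
      c.supp = {x : redSet I1 I2 | ∃ i < k, (x : V) = u i})

/-- The vertex set of the cycle `C'`. -/
def cycleVerts (k : ℕ) (u v : ℕ → V) (p2 : Bool) : Set V :=
  {x | (∃ i < k, x = u i) ∨ (∃ i < blackCount k p2, x = v i)}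

/-! Every red vertex has a neighbour in `I2`, since otherwise it could be added to `I2`. As `G` is
cubic, the neighbours of `u i` are therefore `v i`, `v (i - 1)` and a vertex of `I2`, so trading
the `v i` for the `u i` keeps `I1` independent and of the same size. The `u i` are isolated in the
old red graph and the `v i` are isolated in the new one: a red neighbour of `v i` is within
distance 2 of `u i`, hence is some `u j` because the `u j` form a whole component of `H`. So the
two red graphs are isomorphic. -/

theorem FinsetIndep.insert {G : SimpleGraph V} [DecidableEq V] {I : Finset V} {x : V}
    (hI : FinsetIndep G I) (hx : ∀ w ∈ I, ¬ G.Adj x w) : FinsetIndep G (insert x I) := by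
  intro a ha b hb hab
  rcases Finset.mem_insert.mp ha with rfl | haI <;>
    rcases Finset.mem_insert.mp hb with rfl | hbI
  exacts [G.irrefl hab, hx b hbI hab, hx a haI hab.symm, hI a haI b hbI hab]

theorem CondI.exists_adj_of_mem_redSet {G : SimpleGraph V} [DecidableEq V] {I1 I2 : Finset V}
    (hmax : CondI G I1 I2) (hdisj : Disjoint I1 I2) (hI1 : FinsetIndep G I1)
    (hI2 : FinsetIndep G I2) {x : V} (hx : x ∈ redSet I1 I2) : ∃ w ∈ I2, G.Adj x w := by
  by_contra! hno
  have := hmax I1 (insert x I2) (Finset.disjoint_insert_right.mpr ⟨hx.1, hdisj⟩) hI1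
    (hI2.insert hno)
  rw [Finset.card_insert_of_notMem hx.2] at this
  omega

theorem SimpleGraph.eq_or_eq_or_eq_of_adj_of_degree_eq_three {G : SimpleGraph V} [Fintype V]
    [DecidableEq V] [DecidableRel G.Adj] {x a b c y : V} (hdeg : G.degree x = 3)
    (ha : G.Adj x a) (hb : G.Adj x b) (hc : G.Adj x c) (hab : a ≠ b) (hac : a ≠ c)
    (hbc : b ≠ c) (hy : G.Adj x y) : y = a ∨ y = b ∨ y = c := by
  have hsub : {a, b, c} ⊆ G.neighborFinset x := by
    simp [Finset.insert_subset_iff, ha, hb, hc]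
  have hcard : (G.neighborFinset x).card ≤ ({a, b, c} : Finset V).card := by
    rw [card_neighborFinset_eq_degree, hdeg, Finset.card_insert_of_notMem (by simp [hab, hac]),
      Finset.card_pair hbc]
  have heq := Finset.eq_of_subset_of_card_le hsub hcard
  simpa [← heq] using (G.mem_neighborFinset x y).mpr hy

theorem Finset.card_sdiff_union_of_card_eq {α : Type*} [DecidableEq α] {I A B : Finset α}
    (hA : A ⊆ I) (hB : Disjoint I B) (hcard : A.card = B.card) :
    ((I \ A) ∪ B).card = I.card := by
  rw [card_union_of_disjoint (disjoint_of_subset_left sdiff_subset hB), card_sdiff_of_subset hA,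
    hcard, Nat.sub_add_cancel (hcard ▸ card_le_card hA)]

theorem FinsetIndep.sdiff_union {G : SimpleGraph V} [DecidableEq V] {I A B J : Finset V}
    (hI : FinsetIndep G I) (hIJ : Disjoint I J) (hBA : Disjoint B A) (hBJ : Disjoint B J)
    (hnbr : ∀ b ∈ B, ∀ y, G.Adj b y → y ∈ A ∨ y ∈ J) :
    FinsetIndep G ((I \ A) ∪ B) := by
  have hout : ∀ x ∈ (I \ A) ∪ B, x ∉ A ∧ x ∉ J := by
    intro x hx
    rcases Finset.mem_union.mp hx with hx | hx
    · obtain ⟨hxI, hxA⟩ := Finset.mem_sdiff.mp hx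
      exact ⟨hxA, Finset.disjoint_left.mp hIJ hxI⟩
    · exact ⟨Finset.disjoint_left.mp hBA hx, Finset.disjoint_left.mp hBJ hx⟩
  intro x hx y hy hxy
  by_cases hyB : y ∈ B
  · rcases hnbr y hyB x hxy.symm with h | h
    exacts [(hout x hx).1 h, (hout x hx).2 h]
  by_cases hxB : x ∈ B
  · rcases hnbr x hxB y hxy with h | h
    exacts [(hout y hy).1 h, (hout y hy).2 h]
  simp only [Finset.mem_union, Finset.mem_sdiff, hxB, hyB, or_false] at hx hy
  exact hI x hx.1 y hy.1 hxy

open Set in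
theorem SimpleGraph.card_connectedComponent_induce_eq_of_isolated {G : SimpleGraph V}
    {s t A B : Set V} {φ : V → V} (hφ : BijOn φ A B) (hA : A ⊆ s) (hB : B ⊆ t)
    (hst : s \ A = t \ B) (hAiso : ∀ a ∈ A, ∀ x ∈ s, ¬ G.Adj a x)
    (hBiso : ∀ b ∈ B, ∀ y ∈ t, ¬ G.Adj b y) :
    Nat.card (G.induce s).ConnectedComponent = Nat.card (G.induce t).ConnectedComponent := by
  classical
  set f := A.piecewise φ id
  have hfA : BijOn f A B := hφ.congr (piecewise_eqOn A φ id).symm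
  have hfs : ∀ x ∈ s \ A, f x = x := fun x hx => piecewise_eq_of_notMem _ _ _ hx.2
  have hfsA : BijOn f (s \ A) (t \ B) :=
    hst ▸ (bijOn_id (s \ A)).congr fun x hx => (hfs x hx).symm
  have hf : BijOn f s t := by
    have hinj : InjOn f (A ∪ s \ A) := by
      refine (injOn_union disjoint_sdiff_right).mpr ⟨hfA.injOn, hfsA.injOn, ?_⟩
      intro x hx y hy hxy
      exact (hfsA.mapsTo hy).2 (hxy ▸ hfA.mapsTo hx)
    simpa [union_sdiff_cancel hA, union_sdiff_cancel hB] using hfA.union hfsA hinj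
  have hadj : ∀ x ∈ s, ∀ y ∈ s, G.Adj x y → x ∉ A := fun x _ y hy hxy hxA =>
    hAiso x hxA y hy hxy
  have hadj' : ∀ x ∈ s, ∀ y ∈ s, G.Adj (f x) (f y) → x ∉ A := fun x _ y hy hxy hxA =>
    hBiso _ (hfA.mapsTo hxA) _ (hf.mapsTo hy) hxy
  refine Nat.card_congr (Iso.connectedComponentEquiv ⟨hf.equiv f, ?_⟩)
  rintro ⟨x, hx⟩ ⟨y, hy⟩
  show G.Adj (f x) (f y) ↔ G.Adj x y
  constructor
  · intro h
    have hxA := hadj' x hx y hy h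
    have hyA := hadj' y hy x hx h.symm
    rwa [hfs x ⟨hx, hxA⟩, hfs y ⟨hy, hyA⟩] at h
  · intro h
    rwa [hfs x ⟨hx, hadj x hx y hy h⟩, hfs y ⟨hy, hadj y hy x hx h.symm⟩]

namespace CycleSetup

open Finset

variable {G : SimpleGraph V} {I1 I2 : Finset V} {k : ℕ} {u v : ℕ → V}

theorem exists_eq_of_edist_le_two {p2 : Bool} (hcyc : CycleSetup G I1 I2 k u v p2) {x : V}
    (hx : x ∈ redSet I1 I2) {i : ℕ} (hi : i < k) (hd : G.edist x (u i) ≤ 2) :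
    ∃ j < k, x = u j := by
  obtain ⟨-, hured, -, -, -, -, -, -, -, c, hsupp⟩ := hcyc
  by_cases hxu : x = u i
  · exact ⟨i, hi, hxu⟩
  have hadj : (Hgraph G I1 I2).Adj ⟨x, hx⟩ ⟨u i, hured i hi⟩ :=
    ⟨fun h => hxu (congrArg Subtype.val h), hd⟩
  have hui : (⟨u i, hured i hi⟩ : redSet I1 I2) ∈ c.supp := hsupp ▸ ⟨i, hi, rfl⟩
  have hxc : (⟨x, hx⟩ : redSet I1 I2) ∈ c.supp := by
    rw [ConnectedComponent.mem_supp_iff] at hui ⊢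
    rw [← hui]
    exact ConnectedComponent.sound hadj.reachable
  rw [hsupp] at hxc
  exact hxc

theorem exists_eq_of_adj_v (hcyc : CycleSetup G I1 I2 k u v false) {i : ℕ} (hi : i < k)
    {y : V} (hy : y ∈ redSet I1 I2) (hadj : G.Adj (v i) y) : ∃ j < k, y = u j := by
  have huv : G.Adj (u i) (v i) := by obtain ⟨-, -, -, -, -, -, huv, -⟩ := hcyc; exact huv i hi
  refine hcyc.exists_eq_of_edist_le_two hy hi ?_
  calc G.edist y (u i) ≤ G.edist y (v i) + G.edist (v i) (u i) := SimpleGraph.edist_triangle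
    _ = 2 := by
      rw [edist_eq_one_iff_adj.mpr hadj.symm, edist_eq_one_iff_adj.mpr huv.symm]
      rfl

theorem exists_adj_v_ne (hcyc : CycleSetup G I1 I2 k u v false) {j : ℕ} (hj : j < k) :
    ∃ i < k, i ≠ j ∧ G.Adj (u j) (v i) := by
  obtain ⟨hk, -, -, -, -, -, -, hnext, -⟩ := hcyc
  obtain rfl | hj0 := Nat.eq_zero_or_pos j
  · refine ⟨k - 1, by omega, by omega, ?_⟩
    simpa [Nat.sub_add_cancel (by omega : 1 ≤ k)] using
      (hnext (k - 1) (show k - 1 < k by omega)).symm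
  · refine ⟨j - 1, by omega, by omega, ?_⟩
    simpa [Nat.sub_add_cancel hj0, Nat.mod_eq_of_lt hj] using
      (hnext (j - 1) (show j - 1 < k by omega)).symm

theorem mem_of_adj_image_u [Fintype V] [DecidableEq V] [DecidableRel G.Adj]
    (hcyc : CycleSetup G I1 I2 k u v false) (hcubic : ∀ x, G.degree x = 3)
    (hred : ∀ x ∈ redSet I1 I2, ∃ w ∈ I2, G.Adj x w)
    (hvI2 : Disjoint ((range k).image v) I2) {b : V} (hb : b ∈ (range k).image u)
    {y : V} (hy : G.Adj b y) : y ∈ (range k).image v ∨ y ∈ I2 := by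
  obtain ⟨i, hi, rfl⟩ := mem_image.mp hb
  have hvi : ∀ {j}, j < k → v j ∈ (range k).image v :=
    fun hj => mem_image_of_mem v (mem_range.mpr hj)
  rw [mem_range] at hi
  obtain ⟨p, hp, hpi, hprev⟩ := hcyc.exists_adj_v_ne hi
  obtain ⟨-, hured, -, -, hvinj, -, huv, -⟩ := hcyc
  obtain ⟨w, hw, huw⟩ := hred (u i) (hured i hi)
  have hvv : v i ≠ v p := fun h => hpi (hvinj p hp i hi h.symm)
  have hvw : ∀ {j}, j < k → v j ≠ w := fun hj h =>
    Finset.disjoint_left.mp hvI2 (hvi hj) (h ▸ hw)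
  rcases eq_or_eq_or_eq_of_adj_of_degree_eq_three (hcubic (u i)) (huv i hi) hprev huw hvv
    (hvw hi) (hvw hp) hy with rfl | rfl | rfl
  exacts [Or.inl (hvi hi), Or.inl (hvi hp), Or.inr hw]

theorem coe_image_u_subset_redSet [DecidableEq V] {p2 : Bool}
    (hcyc : CycleSetup G I1 I2 k u v p2) : ↑((range k).image u) ⊆ redSet I1 I2 := by
  obtain ⟨-, hured, -⟩ := hcyc
  rintro _ hx
  obtain ⟨i, hi, rfl⟩ := mem_image.mp hx
  exact hured i (mem_range.mp hi)

theorem injOn_u {p2 : Bool} (hcyc : CycleSetup G I1 I2 k u v p2) : Set.InjOn u (range k) := by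
  obtain ⟨-, -, -, huinj, -⟩ := hcyc
  exact fun i hi j hj => huinj i (mem_range.mp hi) j (mem_range.mp hj)

theorem injOn_v (hcyc : CycleSetup G I1 I2 k u v false) : Set.InjOn v (range k) := by
  obtain ⟨-, -, -, -, hvinj, -⟩ := hcyc
  exact fun i hi j hj => hvinj i (mem_range.mp hi) j (mem_range.mp hj)

theorem disjoint_image_u_image_v [DecidableEq V] (hcyc : CycleSetup G I1 I2 k u v false) :
    Disjoint ((range k).image u) ((range k).image v) := by
  obtain ⟨-, -, -, -, -, huv, -⟩ := hcyc
  simp only [Finset.disjoint_left, mem_image, mem_range, not_exists, not_and]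
  rintro _ ⟨i, hi, rfl⟩ j hj
  exact (huv i hi j hj).symm

theorem card_image_u_eq_card_image_v [DecidableEq V] (hcyc : CycleSetup G I1 I2 k u v false) :
    ((range k).image u).card = ((range k).image v).card := by
  rw [card_image_of_injOn hcyc.injOn_u, card_image_of_injOn hcyc.injOn_v]

theorem numRedComp_swap [DecidableEq V] (hcyc : CycleSetup G I1 I2 k u v false)
    (hI1 : FinsetIndep G I1)
    (hvI1 : (range k).image v ⊆ I1) (hvI2 : Disjoint ((range k).image v) I2)
    (hnbr : ∀ b ∈ (range k).image u, ∀ y, G.Adj b y →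
      y ∈ (range k).image v ∨ y ∈ I2) :
    numRedComp G ((I1 \ (range k).image v) ∪ (range k).image u) I2 = numRedComp G I1 I2 := by
  set U := (range k).image u
  set W := (range k).image v
  have hUW := hcyc.disjoint_image_u_image_v
  have hUred := hcyc.coe_image_u_subset_redSet
  have hφ : Set.BijOn (v ∘ Function.invFunOn u (range k)) U W := by
    simp only [U, W, coe_image]
    exact hcyc.injOn_v.bijOn_image.comp
      (hcyc.injOn_u.bijOn_image.symm hcyc.injOn_u.bijOn_image.invOn_invFunOn.symm)
  symm
  refine SimpleGraph.card_connectedComponent_induce_eq_of_isolated hφ hUred ?_ ?_ ?_ ?_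
  · intro x (hx : x ∈ W)
    refine ⟨?_, Finset.disjoint_left.mp hvI2 hx⟩
    simp only [mem_union, mem_sdiff, not_or, not_and, not_not]
    exact ⟨fun _ => hx, Finset.disjoint_right.mp hUW hx⟩
  · ext x
    simp only [redSet, Set.mem_sdiff, Set.mem_ofPred_eq, mem_coe, mem_union, mem_sdiff]
    have := @hvI1 x
    tauto
  · exact fun b hb y hy hadj => (hnbr b hb y hadj).elim (fun h => hy.1 (hvI1 h)) hy.2
  · rintro _ hx y hy hadj
    obtain ⟨i, hi, rfl⟩ := mem_image.mp hx
    have hyI1 : y ∉ I1 := fun h => hI1 _ (hvI1 hx) y h hadj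
    obtain ⟨j, hj, rfl⟩ := hcyc.exists_eq_of_adj_v (mem_range.mp hi) ⟨hyI1, hy.2⟩ hadj
    exact hy.1 (mem_union_right _ (mem_image_of_mem u (mem_range.mpr hj)))

end CycleSetup

theorem swap_cycle_preserves_conditions_general
    {V : Type*} [Fintype V] [DecidableEq V] (G : SimpleGraph V) [DecidableRel G.Adj]
    (hcubic : ∀ v : V, G.degree v = 3)
    (I1 I2 : Finset V) (hdisj : Disjoint I1 I2)
    (hI1 : FinsetIndep G I1) (hI2 : FinsetIndep G I2)
    (hmax : CondI G I1 I2) (hmin : CondII G I1 I2)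
    (k : ℕ) (u v : ℕ → V)
    (hcyc : CycleSetup G I1 I2 k u v false)
    (hblack : ∀ i < k, v i ∈ I1) :
    FinsetIndep G ((I1 \ (Finset.range k).image v) ∪ (Finset.range k).image u) ∧
    Disjoint ((I1 \ (Finset.range k).image v) ∪ (Finset.range k).image u) I2 ∧
    CondI G ((I1 \ (Finset.range k).image v) ∪ (Finset.range k).image u) I2 ∧
    CondII G ((I1 \ (Finset.range k).image v) ∪ (Finset.range k).image u) I2 := by
  have hvI1 : (Finset.range k).image v ⊆ I1 := by
    simpa [Finset.image_subset_iff] using hblack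
  have hvI2 : Disjoint ((Finset.range k).image v) I2 := Finset.disjoint_of_subset_left hvI1 hdisj
  have huI1 : Disjoint I1 ((Finset.range k).image u) :=
    Finset.disjoint_right.mpr fun _ hx => (hcyc.coe_image_u_subset_redSet hx).1
  have huI2 : Disjoint ((Finset.range k).image u) I2 :=
    Finset.disjoint_left.mpr fun _ hx => (hcyc.coe_image_u_subset_redSet hx).2
  have hnbr : ∀ b ∈ (Finset.range k).image u, ∀ y, G.Adj b y →
      y ∈ (Finset.range k).image v ∨ y ∈ I2 := fun _ hb _ =>
    hcyc.mem_of_adj_image_u hcubic (fun _ => hmax.exists_adj_of_mem_redSet hdisj hI1 hI2) hvI2 hb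
  have hcard :=
    Finset.card_sdiff_union_of_card_eq hvI1 huI1 hcyc.card_image_u_eq_card_image_v.symm
  have hcomp := hcyc.numRedComp_swap hI1 hvI1 hvI2 hnbr
  exact ⟨hI1.sdiff_union hdisj hcyc.disjoint_image_u_image_v huI2 hnbr,
    Finset.disjoint_union_left.mpr
      ⟨Finset.disjoint_of_subset_left Finset.sdiff_subset hdisj, huI2⟩,
    fun J1 J2 hd h1 h2 => hcard ▸ hmax J1 J2 hd h1 h2,
    fun J1 J2 hd h1 h2 hJ => hcomp ▸ hmin J1 J2 hd h1 h2 hJ⟩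

/-- Under Conditions (I) and (II) and the cycle setup in the no-red-`P2` case
with all black vertices of `C'` in `I1`, swapping the black and red vertices of
`C'` inside `I1` again yields a pair of disjoint independent sets satisfying
Conditions (I) and (II). -/
theorem swap_cycle_preserves_conditions
    {V : Type*} [Fintype V] [DecidableEq V] (G : SimpleGraph V) [DecidableRel G.Adj]
    (hconn : G.Connected) (hcubic : ∀ v : V, G.degree v = 3)
    (I1 I2 : Finset V) (hdisj : Disjoint I1 I2)
    (hI1 : FinsetIndep G I1) (hI2 : FinsetIndep G I2)
    (hmax : CondI G I1 I2) (hmin : CondII G I1 I2)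
    (k : ℕ) (u v : ℕ → V)
    (hcyc : CycleSetup G I1 I2 k u v false)
    (hblack : ∀ i < k, v i ∈ I1) :
    FinsetIndep G ((I1 \ (Finset.range k).image v) ∪ (Finset.range k).image u) ∧
    Disjoint ((I1 \ (Finset.range k).image v) ∪ (Finset.range k).image u) I2 ∧
    CondI G ((I1 \ (Finset.range k).image v) ∪ (Finset.range k).image u) I2 ∧
    CondII G ((I1 \ (Finset.range k).image v) ∪ (Finset.range k).image u) I2 :=
  swap_cycle_preserves_conditions_general G hcubic I1 I2 hdisj hI1 hI2 hmax hmin k u v hcyc hblack
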